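/- Let k be an algebraically closed field of characteristic 0 or of characteristic p ≥ 7, let V be a finite-dimensional k-vector space, and let ρ : A_5 → GL(V) be a representation. Let g2, g3, g5 ∈ A_5 be elements of orders exactly 2, 3, 5 respectively with g2·g3·g5 = 1. Then dim V^{ρ(g2)} + dim V^{ρ(g3)} + dim V^{ρ(g5)} = dim V + 2·dim V^{A_5}, where V^{ρ(g)} denotes the fixed subspace {v ∈ V : ρ(g)v = v} and V^{A_5} = {v ∈ V : ρ(g)v = v for all g ∈ A_5}. -/

import Mathlib

/-!
Scott's inequality gives `≤` for every representation of a finite group `G` with `|G|` invertible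
in `k`, as soon as `x, y` generate `G` and `x y z = 1`: in `V³`, the product `K` of the three fixed
spaces and the diagonal both lie in the kernel of
`(a, b, c) ↦ (x - 1) a + x (y - 1) b + x y (z - 1) c`, they meet in the diagonal copy of `V^G`,
and the image of this map together with `V^G` spans `V`.

For `≥`, present `V` as an equivariant quotient of `G → V` with `G` acting by right translation.
There the fixed space of `g` has dimension `[G : ⟨g⟩] dim V`, so for orders `2, 3, 5` in `A₅`
(indices `30 + 20 + 12 = 60 + 2`) Scott's inequality is an equality. Fixed spaces are left exact
and invariants exact (by averaging), so Scott's inequality for the kernel forces equality for `V`.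
-/

open Module

namespace Submodule

variable {k V W : Type*} [Field k] [AddCommGroup V] [Module k V] [AddCommGroup W] [Module k W]

theorem finrank_comap_subtype (p q : Submodule k V) :
    finrank k (q.comap p.subtype) = finrank k (q ⊓ p : Submodule k V) := by
  rw [← (comapSubtypeEquivOfLe (inf_le_right : q ⊓ p ≤ p)).finrank_eq, comap_inf,
    comap_subtype_self, inf_top_eq]

theorem finrank_map_add_finrank_inf_ker [FiniteDimensional k V] (f : V →ₗ[k] W)
    (p : Submodule k V) :
    finrank k (p.map f) + finrank k (p ⊓ LinearMap.ker f : Submodule k V) = finrank k p := by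
  rw [← LinearMap.range_domRestrict, inf_comm, ← finrank_comap_subtype,
    ← LinearMap.ker_domRestrict]
  exact LinearMap.finrank_range_add_finrank_ker _

theorem finrank_prod [FiniteDimensional k V] [FiniteDimensional k W]
    (p : Submodule k V) (q : Submodule k W) :
    finrank k (p.prod q) = finrank k p + finrank k q := by
  have hinj : Function.Injective (p.subtype.prodMap q.subtype) :=
    Prod.map_injective.2 ⟨p.injective_subtype, q.injective_subtype⟩
  rw [← Module.finrank_prod, ← LinearMap.finrank_range_of_inj hinj, LinearMap.range_prodMap,
    range_subtype, range_subtype]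

end Submodule

namespace Representation

variable {k G V W : Type*} [Field k] [Group G] [AddCommGroup V] [Module k V]
  [AddCommGroup W] [Module k W] (ρ : Representation k G V) (σ : Representation k G W)

theorem apply_eq_self_of_mem_closure {s : Set G} {v : V} (hv : ∀ g ∈ s, ρ g v = v) {g : G}
    (hg : g ∈ Subgroup.closure s) : ρ g v = v := by
  induction hg using Subgroup.closure_induction with
  | mem g hg => exact hv g hg
  | one => simp
  | mul a b _ _ ha hb => rw [map_mul, Module.End.mul_apply, hb, ha]
  | inv a _ ha => simpa [ha] using ρ.inv_self_apply a v

theorem sub_mem_of_mem_closure {s : Set G} {S : Submodule k V}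
    (hS : ∀ g ∈ s, ∀ v, ρ g v - v ∈ S) {g : G} (hg : g ∈ Subgroup.closure s) (v : V) :
    ρ g v - v ∈ S := by
  induction hg using Subgroup.closure_induction generalizing v with
  | mem g hg => exact hS g hg v
  | one => simp
  | mul a b _ _ ha hb =>
    have h := S.add_mem (ha (ρ b v)) (hb v)
    rwa [sub_add_sub_cancel, ← Module.End.mul_apply, ← map_mul] at h
  | inv a _ ha =>
    have h := S.neg_mem (ha (ρ a⁻¹ v))
    rwa [self_inv_apply, neg_sub] at h

theorem mem_invariants_of_closure_pair_eq_top {x y : G} (hgen : Subgroup.closure {x, y} = ⊤)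
    {v : V} (hx : ρ x v = v) (hy : ρ y v = v) : v ∈ ρ.invariants := by
  refine fun g => ρ.apply_eq_self_of_mem_closure ?_ (hgen ▸ Subgroup.mem_top g)
  rintro g (rfl | rfl)
  exacts [hx, hy]

theorem sub_mem_of_closure_pair_eq_top {x y : G} (hgen : Subgroup.closure {x, y} = ⊤)
    {S : Submodule k V} (hx : ∀ v, ρ x v - v ∈ S) (hy : ∀ v, ρ x (ρ y v) - ρ x v ∈ S)
    (g : G) (v : V) : ρ g v - v ∈ S := by
  refine ρ.sub_mem_of_mem_closure ?_ (hgen ▸ Subgroup.mem_top g) v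
  rintro g (rfl | rfl) v
  · exact hx v
  · have h := S.sub_mem (hy v) (hx (ρ g v - v))
    rwa [map_sub, sub_sub_cancel] at h

theorem ker_sub_id_eq_invariants_comp_zpowers (g : G) :
    LinearMap.ker (ρ g - LinearMap.id) = invariants (ρ.comp (Subgroup.zpowers g).subtype) := by
  ext v
  simp only [LinearMap.mem_ker, LinearMap.sub_apply, LinearMap.id_apply, sub_eq_zero,
    mem_invariants, MonoidHom.coe_comp, Subgroup.coe_subtype, Function.comp_apply, Subtype.forall]
  refine ⟨fun hv h hh => ρ.apply_eq_self_of_mem_closure (s := {g}) ?_ ?_,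
    fun hv => hv g (Subgroup.mem_zpowers g)⟩
  · rintro _ rfl; exact hv
  · rwa [← Subgroup.zpowers_eq_closure]

theorem finrank_ker_sub_id_subrepresentation (U : Submodule k V) (hU : ∀ g, U ≤ U.comap (ρ g))
    (g : G) :
    finrank k (LinearMap.ker (ρ.subrepresentation U hU g - LinearMap.id))
      = finrank k (LinearMap.ker (ρ g - LinearMap.id) ⊓ U : Submodule k V) := by
  have h : LinearMap.ker (ρ.subrepresentation U hU g - LinearMap.id)
      = (LinearMap.ker (ρ g - LinearMap.id)).comap U.subtype := by
    ext v
    simp [sub_eq_zero, Subtype.ext_iff]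
  rw [h, Submodule.finrank_comap_subtype]

theorem finrank_invariants_subrepresentation (U : Submodule k V)
    (hU : ∀ g, U ≤ U.comap (ρ g)) :
    finrank k (ρ.subrepresentation U hU).invariants
      = finrank k (ρ.invariants ⊓ U : Submodule k V) := by
  have h : (ρ.subrepresentation U hU).invariants = ρ.invariants.comap U.subtype := by
    ext v
    simp [Subtype.ext_iff]
  rw [h, Submodule.finrank_comap_subtype]

section Finite

variable [Fintype G]

theorem sup_invariants_eq_top (hG : (Fintype.card G : k) ≠ 0) {S : Submodule k V}
    (hS : ∀ g v, ρ g v - v ∈ S) :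
    S ⊔ ρ.invariants = ⊤ := by
  refine eq_top_iff.2 fun v _ => ?_
  have hsplit : (Fintype.card G : k) • v = -∑ g, (ρ g v - v) + ρ.norm v := by
    simp [norm, LinearMap.sum_apply, Finset.sum_sub_distrib, ← Nat.cast_smul_eq_nsmul k]
  rw [← Submodule.smul_mem_iff _ hG, hsplit]
  exact Submodule.add_mem_sup (S.neg_mem (S.sum_mem fun g _ => hS g v))
    fun g => ρ.self_norm_apply g v

theorem map_invariants_eq_of_surjective (hG : (Fintype.card G : k) ≠ 0) {φ : V →ₗ[k] W}
    (hφ : IsIntertwiningMap ρ σ φ) (hsurj : Function.Surjective φ) :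
    ρ.invariants.map φ = σ.invariants := by
  refine le_antisymm ?_ fun w hw => ?_
  · rintro _ ⟨v, hv, rfl⟩ g
    rw [← hφ.isIntertwining, hv g]
  · obtain ⟨v, rfl⟩ := hsurj w
    refine ⟨(Fintype.card G : k)⁻¹ • ρ.norm v,
      Submodule.smul_mem _ _ fun g => ρ.self_norm_apply g v, ?_⟩
    have hw' : ∀ g, σ g (φ v) = φ v := hw
    simp [norm, LinearMap.sum_apply, hφ.isIntertwining, hw', ← Nat.cast_smul_eq_nsmul k,
      smul_smul, inv_mul_cancel₀ hG]

end Finite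

section FiniteDimensional

variable [FiniteDimensional k V]

theorem dim_fixed_add_le_dim_add_two_mul_dim_invariants [Fintype G]
    (hG : (Fintype.card G : k) ≠ 0) {x y z : G} (hxyz : x * y * z = 1)
    (hgen : Subgroup.closure {x, y} = ⊤) :
    finrank k (LinearMap.ker (ρ x - LinearMap.id))
      + finrank k (LinearMap.ker (ρ y - LinearMap.id))
      + finrank k (LinearMap.ker (ρ z - LinearMap.id))
      ≤ finrank k V + 2 * finrank k ρ.invariants := by
  let Φ : V × V × V →ₗ[k] V := (ρ x - LinearMap.id).coprod
    ((ρ x ∘ₗ (ρ y - LinearMap.id)).coprod (ρ x ∘ₗ ρ y ∘ₗ (ρ z - LinearMap.id)))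
  let Δ : V →ₗ[k] V × V × V := LinearMap.id.prod (LinearMap.id.prod LinearMap.id)
  let K : Submodule k (V × V × V) := (LinearMap.ker (ρ x - LinearMap.id)).prod
    ((LinearMap.ker (ρ y - LinearMap.id)).prod (LinearMap.ker (ρ z - LinearMap.id)))
  have hxyz' (v : V) : ρ x (ρ y (ρ z v)) = v := by
    rw [← Module.End.mul_apply, ← map_mul, ← Module.End.mul_apply, ← map_mul, hxyz, map_one,
      Module.End.one_apply]
  have hK : finrank k K = finrank k (LinearMap.ker (ρ x - LinearMap.id))
      + finrank k (LinearMap.ker (ρ y - LinearMap.id))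
      + finrank k (LinearMap.ker (ρ z - LinearMap.id)) := by
    rw [Submodule.finrank_prod, Submodule.finrank_prod, add_assoc]
  have hΔ : finrank k (LinearMap.range Δ) = finrank k V :=
    LinearMap.finrank_range_of_inj fun v w h => congrArg Prod.fst h
  have hsup : K ⊔ LinearMap.range Δ ≤ LinearMap.ker Φ := by
    refine sup_le (fun ⟨a, b, c⟩ ⟨ha, hb, hc⟩ => ?_) ?_
    · simp_all [Φ, K]
    · rintro _ ⟨v, rfl⟩
      simp [Φ, Δ, hxyz']
  have hinf : K ⊓ LinearMap.range Δ ≤ ρ.invariants.map Δ := by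
    rintro _ ⟨⟨hx, hy, -⟩, v, rfl⟩
    simp only [Δ, SetLike.mem_coe, LinearMap.mem_ker, LinearMap.sub_apply, sub_eq_zero] at hx hy
    exact ⟨v, ρ.mem_invariants_of_closure_pair_eq_top hgen hx hy, rfl⟩
  have hrange : LinearMap.range Φ ⊔ ρ.invariants = ⊤ :=
    ρ.sup_invariants_eq_top hG <| ρ.sub_mem_of_closure_pair_eq_top hgen
      (fun v => ⟨(v, 0, 0), by simp [Φ]⟩) (fun v => ⟨(0, v, 0), by simp [Φ]⟩)
  have h1 := Submodule.finrank_sup_add_finrank_inf_eq K (LinearMap.range Δ)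
  have h2 := Submodule.finrank_mono hsup
  have h3 := (Submodule.finrank_mono hinf).trans (Submodule.finrank_map_le Δ ρ.invariants)
  have h4 := LinearMap.finrank_range_add_finrank_ker Φ
  have h5 := Submodule.finrank_add_le_finrank_add_finrank (LinearMap.range Φ) ρ.invariants
  rw [hrange, finrank_top] at h5
  simp only [Module.finrank_prod] at h4
  omega

section Exact

variable {ρ σ} {φ : V →ₗ[k] W}

theorem finrank_ker_sub_id_le [FiniteDimensional k W] (hφ : IsIntertwiningMap ρ σ φ) (g : G) :
    finrank k (LinearMap.ker (ρ g - LinearMap.id))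
      ≤ finrank k (LinearMap.ker (ρ g - LinearMap.id) ⊓ LinearMap.ker φ : Submodule k V)
        + finrank k (LinearMap.ker (σ g - LinearMap.id)) := by
  have hmap :
      (LinearMap.ker (ρ g - LinearMap.id)).map φ ≤ LinearMap.ker (σ g - LinearMap.id) := by
    rintro _ ⟨v, hv, rfl⟩
    simp_all [sub_eq_zero, ← hφ.isIntertwining]
  have := Submodule.finrank_map_add_finrank_inf_ker φ (LinearMap.ker (ρ g - LinearMap.id))
  have := Submodule.finrank_mono hmap
  omega

theorem finrank_invariants_eq_add [Fintype G] (hG : (Fintype.card G : k) ≠ 0)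
    (hφ : IsIntertwiningMap ρ σ φ) (hsurj : Function.Surjective φ) :
    finrank k ρ.invariants
      = finrank k (ρ.invariants ⊓ LinearMap.ker φ : Submodule k V)
        + finrank k σ.invariants := by
  rw [← ρ.map_invariants_eq_of_surjective σ hG hφ hsurj, add_comm,
    Submodule.finrank_map_add_finrank_inf_ker]

end Exact

end FiniteDimensional

variable (k G W) in
def rightTranslation : Representation k G (G → W) where
  toFun g := LinearMap.funLeft k W (· * g)
  map_one' := by ext; simp
  map_mul' g h := by ext; simp [mul_assoc]

@[simp]
theorem rightTranslation_apply (g : G) (f : G → W) (x : G) :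
    rightTranslation k G W g f x = f (x * g) := rfl

theorem invariants_rightTranslation_comp_subtype (H : Subgroup G) :
    invariants ((rightTranslation k G W).comp H.subtype)
      = LinearMap.range (LinearMap.funLeft k W (QuotientGroup.mk : G → G ⧸ H)) := by
  ext f
  simp only [mem_invariants, MonoidHom.coe_comp, Subgroup.coe_subtype, Function.comp_apply,
    Subtype.forall, LinearMap.mem_range]
  constructor
  · intro hf
    refine ⟨Quotient.lift f fun a b hab => ?_, rfl⟩
    rw [← mul_inv_cancel_left a b]
    exact (congrFun (hf _ (QuotientGroup.leftRel_apply.1 hab)) a).symm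
  · rintro ⟨f, rfl⟩ h hh
    ext x
    simp [LinearMap.funLeft_apply, QuotientGroup.mk_mul_of_mem x hh]

theorem finrank_invariants_rightTranslation_comp_subtype [Finite G] [FiniteDimensional k W]
    (H : Subgroup G) :
    finrank k (invariants ((rightTranslation k G W).comp H.subtype)) = H.index * finrank k W := by
  have : Fintype (G ⧸ H) := Fintype.ofFinite _
  rw [invariants_rightTranslation_comp_subtype, LinearMap.finrank_range_of_inj
    (LinearMap.funLeft_injective_of_surjective k W _ QuotientGroup.mk_surjective),
    Module.finrank_pi_fintype, Finset.sum_const, Finset.card_univ, smul_eq_mul,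
    Subgroup.index, Nat.card_eq_fintype_card]

theorem finrank_ker_sub_id_rightTranslation [Finite G] [FiniteDimensional k W] (g : G) :
    finrank k (LinearMap.ker (rightTranslation k G W g - LinearMap.id))
      = (Subgroup.zpowers g).index * finrank k W := by
  rw [ker_sub_id_eq_invariants_comp_zpowers, finrank_invariants_rightTranslation_comp_subtype]

theorem finrank_invariants_rightTranslation [Finite G] [FiniteDimensional k W] :
    finrank k (rightTranslation k G W).invariants = finrank k W := by
  have h : (rightTranslation k G W).invariants
      = invariants ((rightTranslation k G W).comp (⊤ : Subgroup G).subtype) := by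
    ext f
    simp
  rw [h, finrank_invariants_rightTranslation_comp_subtype, Subgroup.index_top, one_mul]

section FromRightTranslation

variable [Fintype G]

def fromRightTranslation : (G → V) →ₗ[k] V := ∑ g : G, ρ g⁻¹ ∘ₗ LinearMap.proj g

theorem fromRightTranslation_apply (f : G → V) :
    ρ.fromRightTranslation f = ∑ g : G, ρ g⁻¹ (f g) := by
  simp [fromRightTranslation, LinearMap.sum_apply]

theorem isIntertwiningMap_fromRightTranslation :
    IsIntertwiningMap (rightTranslation k G V) ρ ρ.fromRightTranslation := by
  refine ⟨fun g f => ?_⟩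
  rw [fromRightTranslation_apply, fromRightTranslation_apply, map_sum]
  exact Fintype.sum_equiv (Equiv.mulRight g) _ _ fun x => by
    simp [← Module.End.mul_apply, ← map_mul]

theorem fromRightTranslation_surjective : Function.Surjective ρ.fromRightTranslation := by
  classical
  intro v
  refine ⟨Pi.single 1 v, ?_⟩
  rw [fromRightTranslation_apply, Finset.sum_eq_single_of_mem 1 (Finset.mem_univ 1)
    fun g _ hg => by rw [Pi.single_eq_of_ne hg, map_zero]]
  simp

end FromRightTranslation

theorem dim_add_two_mul_dim_invariants_le_dim_fixed_add [Fintype G] [FiniteDimensional k V]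
    (hG : (Fintype.card G : k) ≠ 0) {x y z : G} (hxyz : x * y * z = 1)
    (hgen : Subgroup.closure {x, y} = ⊤)
    (hindex : (Subgroup.zpowers x).index + (Subgroup.zpowers y).index
      + (Subgroup.zpowers z).index = Fintype.card G + 2) :
    finrank k V + 2 * finrank k ρ.invariants
      ≤ finrank k (LinearMap.ker (ρ x - LinearMap.id))
        + finrank k (LinearMap.ker (ρ y - LinearMap.id))
        + finrank k (LinearMap.ker (ρ z - LinearMap.id)) := by
  set R := rightTranslation k G V
  set φ := ρ.fromRightTranslation
  have hφ : IsIntertwiningMap R ρ φ := ρ.isIntertwiningMap_fromRightTranslation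
  have hsurj : Function.Surjective φ := ρ.fromRightTranslation_surjective
  have hK (g : G) : LinearMap.ker φ ≤ (LinearMap.ker φ).comap (R g) := fun f hf => by
    simp_all [hφ.isIntertwining]
  have hscott := (R.subrepresentation _ hK).dim_fixed_add_le_dim_add_two_mul_dim_invariants
    hG hxyz hgen
  simp only [finrank_ker_sub_id_subrepresentation, finrank_invariants_subrepresentation] at hscott
  have hx := finrank_ker_sub_id_le hφ x
  have hy := finrank_ker_sub_id_le hφ y
  have hz := finrank_ker_sub_id_le hφ z
  have hinv := finrank_invariants_eq_add hG hφ hsurj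
  have hdim := LinearMap.finrank_range_add_finrank_ker φ
  rw [LinearMap.range_eq_top.2 hsurj, finrank_top, Module.finrank_pi_fintype, Finset.sum_const,
    Finset.card_univ, smul_eq_mul] at hdim
  simp only [R, finrank_ker_sub_id_rightTranslation, finrank_invariants_rightTranslation]
    at hx hy hz hinv
  have := congrArg (· * finrank k V) hindex
  simp only [add_mul] at this
  linarith

end Representation

theorem closure_pair_eq_top_of_card_eq_sixty {G : Type*} [Group G] [IsSimpleGroup G]
    (hG : Nat.card G = 60) {x y z : G} (hx : orderOf x = 2) (hy : orderOf y = 3)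
    (hz : orderOf z = 5) (hxyz : x * y * z = 1) : Subgroup.closure {x, y} = ⊤ := by
  set H := Subgroup.closure ({x, y} : Set G)
  have hxH : x ∈ H := Subgroup.subset_closure (by simp)
  have hyH : y ∈ H := Subgroup.subset_closure (by simp)
  have hzH : z ∈ H := by
    rw [eq_inv_of_mul_eq_one_right hxyz]
    exact inv_mem (mul_mem hxH hyH)
  have h30 : 2 * 3 * 5 ∣ Nat.card H :=
    Nat.Coprime.mul_dvd_of_dvd_of_dvd (by norm_num)
      (Nat.Coprime.mul_dvd_of_dvd_of_dvd (by norm_num)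
        (hx ▸ Subgroup.orderOf_dvd_natCard H hxH) (hy ▸ Subgroup.orderOf_dvd_natCard H hyH))
      (hz ▸ Subgroup.orderOf_dvd_natCard H hzH)
  have hindex : H.index ∣ 2 := by
    obtain ⟨c, hc⟩ := h30
    have h := H.index_mul_card
    rw [hG, hc] at h
    exact Dvd.intro c (by linarith)
  rcases (Nat.dvd_prime Nat.prime_two).1 hindex with h1 | h2
  · exact Subgroup.index_eq_one.1 h1
  · refine (IsSimpleGroup.eq_bot_or_eq_top_of_normal H
      (Subgroup.normal_of_index_eq_two h2)).resolve_left fun hbot => ?_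
    rw [hbot, Subgroup.card_bot] at h30
    norm_num at h30

theorem natCast_sixty_ne_zero {k : Type*} [AddMonoidWithOne k]
    (hchar : CharZero k ∨ ∃ p : ℕ, p.Prime ∧ 7 ≤ p ∧ CharP k p) :
    ((60 : ℕ) : k) ≠ 0 := by
  rcases hchar with hk | ⟨p, hp, hp7, hkp⟩
  · exact Nat.cast_ne_zero.2 (by norm_num)
  · rw [Ne, CharP.cast_eq_zero_iff k p, show 60 = 2 * 2 * 3 * 5 from rfl]
    simp only [hp.dvd_mul]
    rintro (((h | h) | h) | h) <;> have := Nat.le_of_dvd (by norm_num) h <;> omega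

theorem dim_fixed_add_eq_dim_add_two_mul_dim_invariants_general
    (k : Type*) [Field k]
    (hchar : CharZero k ∨ ∃ p : ℕ, p.Prime ∧ 7 ≤ p ∧ CharP k p)
    (V : Type*) [AddCommGroup V] [Module k V] [FiniteDimensional k V]
    (ρ : Representation k (alternatingGroup (Fin 5)) V)
    (g2 g3 g5 : alternatingGroup (Fin 5))
    (h2 : orderOf g2 = 2) (h3 : orderOf g3 = 3) (h5 : orderOf g5 = 5)
    (h235 : g2 * g3 * g5 = 1) :
    finrank k (LinearMap.ker (ρ g2 - LinearMap.id))
      + finrank k (LinearMap.ker (ρ g3 - LinearMap.id))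
      + finrank k (LinearMap.ker (ρ g5 - LinearMap.id))
      = finrank k V + 2 * finrank k ρ.invariants := by
  have : IsSimpleGroup (alternatingGroup (Fin 5)) := alternatingGroup.isSimpleGroup (by simp)
  have hcard : Nat.card (alternatingGroup (Fin 5)) = 60 := by
    rw [nat_card_alternatingGroup, Nat.card_eq_fintype_card, Fintype.card_fin]; rfl
  have hG : (Fintype.card (alternatingGroup (Fin 5)) : k) ≠ 0 := by
    rw [← Nat.card_eq_fintype_card, hcard]
    exact natCast_sixty_ne_zero hchar
  have hgen := closure_pair_eq_top_of_card_eq_sixty hcard h2 h3 h5 h235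
  have hindex : (Subgroup.zpowers g2).index + (Subgroup.zpowers g3).index
      + (Subgroup.zpowers g5).index = Fintype.card (alternatingGroup (Fin 5)) + 2 := by
    have i2 := (Subgroup.zpowers g2).index_mul_card
    have i3 := (Subgroup.zpowers g3).index_mul_card
    have i5 := (Subgroup.zpowers g5).index_mul_card
    simp only [Nat.card_zpowers, h2, h3, h5, hcard] at i2 i3 i5
    rw [← Nat.card_eq_fintype_card, hcard]
    omega
  exact le_antisymm (ρ.dim_fixed_add_le_dim_add_two_mul_dim_invariants hG h235 hgen)
    (ρ.dim_add_two_mul_dim_invariants_le_dim_fixed_add hG h235 hgen hindex)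

/-- Serre's dimension formula (Lemma 1.3, vector space form): if `ρ` is a representation of
the alternating group `A₅` on a finite dimensional vector space `V` over an algebraically
closed field of characteristic `0` or `p ≥ 7`, and `g₂, g₃, g₅ ∈ A₅` have orders `2, 3, 5`
with `g₂g₃g₅ = 1`, then the sum of the dimensions of the fixed spaces of `ρ(g₂), ρ(g₃), ρ(g₅)`
equals `dim V + 2 dim V^{A₅}`. -/
theorem dim_fixed_add_eq_dim_add_two_mul_dim_invariants
    (k : Type*) [Field k] [IsAlgClosed k]
    (hchar : CharZero k ∨ ∃ p : ℕ, p.Prime ∧ 7 ≤ p ∧ CharP k p)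
    (V : Type*) [AddCommGroup V] [Module k V] [FiniteDimensional k V]
    (ρ : Representation k (alternatingGroup (Fin 5)) V)
    (g2 g3 g5 : alternatingGroup (Fin 5))
    (h2 : orderOf g2 = 2) (h3 : orderOf g3 = 3) (h5 : orderOf g5 = 5)
    (h235 : g2 * g3 * g5 = 1) :
    finrank k (LinearMap.ker (ρ g2 - LinearMap.id))
      + finrank k (LinearMap.ker (ρ g3 - LinearMap.id))
      + finrank k (LinearMap.ker (ρ g5 - LinearMap.id))
      = finrank k V + 2 * finrank k ρ.invariants :=
  dim_fixed_add_eq_dim_add_two_mul_dim_invariants_general k hchar V ρ g2 g3 g5 h2 h3 h5 h235
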